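/- arXiv:2105.04873 — 4 statements merged into one kernel-verified Lean document; each statement's English description precedes it below -/
import Mathlib

section
/- Let $f,h:\mathbb{R}^d\to\mathbb{R}$ be differentiable, with $h$ convex, and let $L>0$. Then $Lh-f$ and $Lh+f$ are both convex if and only if $|f(x)-f(y)-\langle\nabla f(y),x-y\rangle|\leq L\,D_h(x,y)$ for all $x,y\in\mathbb{R}^d$ (the full extended descent lemma). -/
open RealInnerProductSpace Set

/-!
Both sides are first-order characterisations of convexity: a differentiable `g` is convex iff
`g y + g'(y) (x - y) ≤ g x` for all `x, y`. Applied to `L h - f` and `L h + f`, whose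
linearisation errors are `L D_h(x, y) ∓ (f x - f y - ⟪∇f(y), x - y⟫)`, the two convexity
conditions together say exactly that the linearisation error of `f` is bounded in absolute value
by `L D_h`.
-/

section FirstOrderConvexity

variable {E : Type*} [NormedAddCommGroup E] [NormedSpace ℝ E] {s : Set E} {g : E → ℝ}

theorem ConvexOn.fderiv_apply_sub_le {g' : E →L[ℝ] ℝ} {x y : E} (hg : ConvexOn ℝ s g)
    (hx : x ∈ s) (hy : y ∈ s) (hd : HasFDerivAt g g' y) :
    g' (x - y) ≤ g x - g y := by
  have hline : ConvexOn ℝ (AffineMap.lineMap y x ⁻¹' s) (g ∘ AffineMap.lineMap y x) :=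
    hg.comp_affineMap _
  have hderiv : HasDerivAt (g ∘ (AffineMap.lineMap y x : ℝ →ᵃ[ℝ] E)) (g' (x - y)) 0 := by
    refine HasFDerivAt.comp_hasDerivAt (0 : ℝ) ?_ AffineMap.hasDerivAt_lineMap
    simpa using hd
  have := hline.le_slope_of_hasDerivAt (x := 0) (y := 1) (by simpa using hy) (by simpa using hx)
    zero_lt_one hderiv
  simpa [slope_def_field] using this

theorem convexOn_of_fderiv_apply_sub_le (hs : Convex ℝ s) (g' : E → E →L[ℝ] ℝ)
    (h : ∀ x ∈ s, ∀ y ∈ s, g' y (x - y) ≤ g x - g y) :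
    ConvexOn ℝ s g := by
  refine ⟨hs, fun x hx y hy a b ha hb hab => ?_⟩
  set z := a • x + b • y
  have hz : z ∈ s := hs hx hy ha hb hab
  -- `z` is the `(a, b)`-average of `x` and `y`, so the linear terms cancel
  have hbalance : a * g' z (x - z) + b * g' z (y - z) = 0 := by
    rw [← smul_eq_mul, ← smul_eq_mul, ← map_smul, ← map_smul, ← map_add]
    convert (g' z).map_zero using 2
    linear_combination (norm := module) -hab • z
  have hgz : a * g z + b * g z = g z := by rw [← add_mul, hab, one_mul]
  have hx' := mul_le_mul_of_nonneg_left (h x hx z hz) ha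
  have hy' := mul_le_mul_of_nonneg_left (h y hy z hz) hb
  simp only [smul_eq_mul]
  nlinarith

theorem convexOn_univ_iff_forall_fderiv_apply_sub_le {g' : E → E →L[ℝ] ℝ}
    (hd : ∀ x, HasFDerivAt g (g' x) x) :
    ConvexOn ℝ univ g ↔ ∀ x y, g' y (x - y) ≤ g x - g y :=
  ⟨fun hg x y => hg.fderiv_apply_sub_le (mem_univ x) (mem_univ y) (hd y),
    fun h => convexOn_of_fderiv_apply_sub_le convex_univ g' fun x _ y _ => h x y⟩

end FirstOrderConvexity

theorem full_extended_descent_lemma_general (d : ℕ)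
    (f h : EuclideanSpace ℝ (Fin d) → ℝ)
    (f' h' : EuclideanSpace ℝ (Fin d) → EuclideanSpace ℝ (Fin d))
    (hf : ∀ x, HasGradientAt f (f' x) x)
    (hh : ∀ x, HasGradientAt h (h' x) x)
    (L : ℝ)
    (D : EuclideanSpace ℝ (Fin d) → EuclideanSpace ℝ (Fin d) → ℝ)
    (hD : ∀ x y, D x y = h x - h y - ⟪h' y, x - y⟫) :
    (ConvexOn ℝ Set.univ (fun x => L * h x - f x) ∧
      ConvexOn ℝ Set.univ (fun x => L * h x + f x)) ↔
    (∀ x y, |f x - f y - ⟪f' y, x - y⟫| ≤ L * D x y) := by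
  rw [convexOn_univ_iff_forall_fderiv_apply_sub_le (g := fun x => L * h x - f x)
      fun x => ((hh x).hasFDerivAt.const_mul L).sub (hf x).hasFDerivAt,
    convexOn_univ_iff_forall_fderiv_apply_sub_le (g := fun x => L * h x + f x)
      fun x => ((hh x).hasFDerivAt.const_mul L).add (hf x).hasFDerivAt, ← forall_and]
  refine forall_congr' fun x => forall_and.symm.trans (forall_congr' fun y => ?_)
  simp only [sub_apply, add_apply, smul_apply, InnerProductSpace.toDual_apply_apply,
    smul_eq_mul, hD, abs_le]
  constructor <;> rintro ⟨_, _⟩ <;> constructor <;> linarith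

/-- Full extended descent lemma: `(f, h)` is `L`-smooth adaptable iff
`|f(x) - f(y) - ⟪∇f(y), x - y⟫| ≤ L D_h(x, y)` for all `x, y`. -/
theorem full_extended_descent_lemma (d : ℕ)
    (f h : EuclideanSpace ℝ (Fin d) → ℝ)
    (f' h' : EuclideanSpace ℝ (Fin d) → EuclideanSpace ℝ (Fin d))
    (hf : ∀ x, HasGradientAt f (f' x) x)
    (hh : ∀ x, HasGradientAt h (h' x) x)
    (hconv : ConvexOn ℝ Set.univ h)
    (L : ℝ) (hL : 0 < L)
    (D : EuclideanSpace ℝ (Fin d) → EuclideanSpace ℝ (Fin d) → ℝ)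
    (hD : ∀ x y, D x y = h x - h y - ⟪h' y, x - y⟫) :
    (ConvexOn ℝ Set.univ (fun x => L * h x - f x) ∧
      ConvexOn ℝ Set.univ (fun x => L * h x + f x)) ↔
    (∀ x y, |f x - f y - ⟪f' y, x - y⟫| ≤ L * D x y) :=
  full_extended_descent_lemma_general d f h f' h' hf hh L D hD
end

section
/- Let $f_1,f_2,g,h:\mathbb{R}^d\to\mathbb{R}$ with $f_1$ convex differentiable, $f_2$ convex, $h$ convex differentiable, and suppose $Lh-f_1$ is convex for some $L>0$. Let $0<\lambda$, let $x\in\mathbb{R}^d$, $\xi$ a subgradient of $f_2$ at $x$, and let $x^+$ be a global minimizer of $u\mapsto g(u)+\langle\nabla f_1(x)-\xi,u-x\rangle+\frac{1}{\lambda}D_h(u,x)$. Then, with $\Psi=f_1-f_2+g$, it holds that $\lambda\Psi(x^+)\leq\lambda\Psi(x)-(1-\lambda L)D_h(x^+,x)$. -/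
open RealInnerProductSpace

/-!
Convexity of `L h - f₁` gives the descent bound
`f₁ x⁺ ≤ f₁ x + ⟪∇f₁ x, x⁺ - x⟫ + L D_h(x⁺, x)`, the subgradient inequality bounds `-f₂ x⁺`,
and comparing the subproblem at its minimizer `x⁺` with its value at `u = x`, where `D_h`
vanishes, bounds `g x⁺`. The sum of the three, scaled by `λ`, is the claim.
-/

theorem ConvexOn.add_apply_sub_le_of_hasFDerivAt {E : Type*} [NormedAddCommGroup E]
    [NormedSpace ℝ E] {s : Set E} {f : E → ℝ} {f' : E →L[ℝ] ℝ} {y z : E}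
    (hf : ConvexOn ℝ s f) (hy : y ∈ s) (hz : z ∈ s) (hf' : HasFDerivAt f f' y) :
    f y + f' (z - y) ≤ f z := by
  have hline : ConvexOn ℝ (AffineMap.lineMap y z ⁻¹' s) (f ∘ AffineMap.lineMap y z) :=
    hf.comp_affineMap _
  have hderiv : HasDerivAt (f ∘ AffineMap.lineMap y z) (f' (z - y)) (0 : ℝ) := by
    refine HasFDerivAt.comp_hasDerivAt _ ?_ AffineMap.hasDerivAt_lineMap
    simpa using hf'
  have := hline.le_slope_of_hasDerivAt (x := 0) (y := 1) (by simpa using hy) (by simpa using hz)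
    zero_lt_one hderiv
  rw [slope_def_field] at this
  simp only [Function.comp_apply, AffineMap.lineMap_apply_zero, AffineMap.lineMap_apply_one,
    sub_zero, div_one] at this
  linarith

variable {F : Type*} [NormedAddCommGroup F] [InnerProductSpace ℝ F]

def bregmanDiv (h : F → ℝ) (h' : F → F) (x y : F) : ℝ := h x - h y - ⟪h' y, x - y⟫

@[simp]
theorem bregmanDiv_self (h : F → ℝ) (h' : F → F) (x : F) : bregmanDiv h h' x x = 0 := by
  simp [bregmanDiv]

theorem ConvexOn.le_add_inner_add_mul_bregmanDiv [CompleteSpace F] {f h : F → ℝ} {f' : F}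
    {h' : F → F} {L : ℝ} {y : F} (hLhf : ConvexOn ℝ Set.univ (fun x => L * h x - f x))
    (hf : HasGradientAt f f' y) (hh : HasGradientAt h (h' y) y) (z : F) :
    f z ≤ f y + ⟪f', z - y⟫ + L * bregmanDiv h h' z y := by
  have hderiv := (hh.hasFDerivAt.const_smul L).sub hf.hasFDerivAt
  have := hLhf.add_apply_sub_le_of_hasFDerivAt (Set.mem_univ y) (Set.mem_univ z) hderiv
  simp only [sub_apply, smul_apply, InnerProductSpace.toDual_apply_apply, smul_eq_mul] at this
  rw [bregmanDiv]
  linarith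

theorem bpdca_sufficient_decrease_general (d : ℕ)
    (f₁ f₂ g h : EuclideanSpace ℝ (Fin d) → ℝ)
    (f₁' h' : EuclideanSpace ℝ (Fin d) → EuclideanSpace ℝ (Fin d))
    (hf₁ : ∀ x, HasGradientAt f₁ (f₁' x) x)
    (hh : ∀ x, HasGradientAt h (h' x) x)
    (L : ℝ)
    (hsmad : ConvexOn ℝ Set.univ (fun x => L * h x - f₁ x))
    (D : EuclideanSpace ℝ (Fin d) → EuclideanSpace ℝ (Fin d) → ℝ)
    (hD : ∀ x y, D x y = h x - h y - ⟪h' y, x - y⟫)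
    (Ψ : EuclideanSpace ℝ (Fin d) → ℝ)
    (hΨ : ∀ x, Ψ x = f₁ x - f₂ x + g x)
    (lam : ℝ) (hlam : 0 < lam)
    (x ξ xplus : EuclideanSpace ℝ (Fin d))
    (hξ : ∀ y, f₂ y ≥ f₂ x + ⟪ξ, y - x⟫)
    (hmin : ∀ u, g xplus + ⟪f₁' x - ξ, xplus - x⟫ + (1 / lam) * D xplus x ≤
      g u + ⟪f₁' x - ξ, u - x⟫ + (1 / lam) * D u x) :
    lam * Ψ xplus ≤ lam * Ψ x - (1 - lam * L) * D xplus x := by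
  obtain rfl : D = bregmanDiv h h' := funext₂ hD
  have hdescent := hsmad.le_add_inner_add_mul_bregmanDiv (hf₁ x) (hh x) xplus
  have hsubgrad := hξ xplus
  have hprox :
      lam * (g xplus + ⟪f₁' x - ξ, xplus - x⟫) + bregmanDiv h h' xplus x ≤ lam * g x := by
    have := mul_le_mul_of_nonneg_left (hmin x) hlam.le
    simpa [mul_add, ← mul_assoc, hlam.ne'] using this
  rw [inner_sub_left] at hprox
  rw [hΨ, hΨ]
  linear_combination lam * hdescent + lam * hsubgrad + hprox

/-- Sufficient decrease lemma for the Bregman proximal DC algorithm (BPDCA). -/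
theorem bpdca_sufficient_decrease (d : ℕ)
    (f₁ f₂ g h : EuclideanSpace ℝ (Fin d) → ℝ)
    (f₁' h' : EuclideanSpace ℝ (Fin d) → EuclideanSpace ℝ (Fin d))
    (hf₁ : ∀ x, HasGradientAt f₁ (f₁' x) x)
    (hh : ∀ x, HasGradientAt h (h' x) x)
    (hf₁conv : ConvexOn ℝ Set.univ f₁)
    (hf₂conv : ConvexOn ℝ Set.univ f₂)
    (hhconv : ConvexOn ℝ Set.univ h)
    (L : ℝ) (hL : 0 < L)
    (hsmad : ConvexOn ℝ Set.univ (fun x => L * h x - f₁ x))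
    (D : EuclideanSpace ℝ (Fin d) → EuclideanSpace ℝ (Fin d) → ℝ)
    (hD : ∀ x y, D x y = h x - h y - ⟪h' y, x - y⟫)
    (Ψ : EuclideanSpace ℝ (Fin d) → ℝ)
    (hΨ : ∀ x, Ψ x = f₁ x - f₂ x + g x)
    (lam : ℝ) (hlam : 0 < lam)
    (x ξ xplus : EuclideanSpace ℝ (Fin d))
    (hξ : ∀ y, f₂ y ≥ f₂ x + ⟪ξ, y - x⟫)
    (hmin : ∀ u, g xplus + ⟪f₁' x - ξ, xplus - x⟫ + (1 / lam) * D xplus x ≤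
      g u + ⟪f₁' x - ξ, u - x⟫ + (1 / lam) * D u x) :
    lam * Ψ xplus ≤ lam * Ψ x - (1 - lam * L) * D xplus x :=
  bpdca_sufficient_decrease_general d f₁ f₂ g h f₁' h' hf₁ hh L hsmad D hD Ψ hΨ lam hlam x ξ xplus
    hξ hmin
end

section
/- Define $f_1(x)=\frac{1}{4}\sum_{r=1}^m\langle a_r,x\rangle^4+\frac{1}{4}\|b\|^2$ and $h(x)=\frac{1}{4}\|x\|^4$ on $\mathbb{R}^d$, where $a_1,\ldots,a_m\in\mathbb{R}^d$ and $b\in\mathbb{R}^m$. Then for any $L\geq 3\left\|\sum_{r=1}^m\|a_r\|^2 a_r a_r^{\mathrm{T}}\right\|$ (operator norm), the function $Lh-f_1$ is convex on $\mathbb{R}^d$. -/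
/-!
Convexity on `E` reduces to convexity along every line `t ↦ y = x + t • v`, where the second
derivative of `t ↦ L‖y‖⁴/4 - f₁(y)` is `L (2⟪y, v⟫² + ‖y‖²‖v‖²) - 3 ∑ ⟪aᵣ, y⟫²⟪aᵣ, v⟫²`.
Cauchy–Schwarz `⟪aᵣ, y⟫² ≤ ‖aᵣ‖²‖y‖²` bounds the sum by `‖y‖² ⟪M v, v⟫ ≤ ‖M‖ ‖y‖²‖v‖²`
with `M = ∑ ‖aᵣ‖² aᵣ aᵣᵀ`, so `L ≥ 3‖M‖` makes it nonnegative.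
-/

open RealInnerProductSpace Set

theorem convexOn_univ_of_convexOn_line {𝕜 E β : Type*} [Field 𝕜] [LinearOrder 𝕜]
    [IsStrictOrderedRing 𝕜] [AddCommGroup E] [Module 𝕜 E] [AddCommMonoid β] [PartialOrder β]
    [Module 𝕜 β] {f : E → β} (hf : ∀ x v : E, ConvexOn 𝕜 univ fun t : 𝕜 => f (x + t • v)) :
    ConvexOn 𝕜 univ f := by
  refine ⟨convex_univ, fun x _ y _ s t hs ht hst => ?_⟩
  have hxy : s • x + t • y = x + t • (y - x) := by
    obtain rfl : s = 1 - t := eq_sub_of_add_eq hst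
    module
  have h := (hf x (y - x)).2 (mem_univ 0) (mem_univ 1) hs ht hst
  simp only [smul_eq_mul, mul_zero, mul_one, zero_add, zero_smul, one_smul, add_zero,
    add_sub_cancel] at h
  rwa [hxy]

theorem convexOn_univ_of_hasDerivAt2_nonneg {f f' f'' : ℝ → ℝ}
    (hf' : ∀ t, HasDerivAt f (f' t) t) (hf'' : ∀ t, HasDerivAt f' (f'' t) t)
    (hf''₀ : ∀ t, 0 ≤ f'' t) : ConvexOn ℝ univ f :=
  convexOn_of_hasDerivWithinAt2_nonneg convex_univ
    (fun t _ => (hf' t).differentiableAt.continuousAt.continuousWithinAt)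
    (fun t _ => by rw [interior_univ]; exact (hf' t).hasDerivWithinAt)
    (fun t _ => by rw [interior_univ]; exact (hf'' t).hasDerivWithinAt)
    fun t _ => hf''₀ t

section InnerProductSpace

variable {E : Type*} [NormedAddCommGroup E] [InnerProductSpace ℝ E] {ι : Type*} [Fintype ι]

theorem sum_mul_inner_sq_le_opNorm_mul_sq (w : ι → ℝ) (a : ι → E) (v : E) :
    ∑ r, w r * ⟪a r, v⟫ ^ 2 ≤ ‖∑ r, w r • (innerSL ℝ (a r)).smulRight (a r)‖ * ‖v‖ ^ 2 := by
  set M := ∑ r, w r • (innerSL ℝ (a r)).smulRight (a r)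
  have hM : ⟪M v, v⟫ = ∑ r, w r * ⟪a r, v⟫ ^ 2 := by
    simp only [M, FunLike.coe_sum, Finset.sum_apply, FunLike.coe_smul, Pi.smul_apply,
      ContinuousLinearMap.smulRight_apply, innerSL_apply_apply, sum_inner, real_inner_smul_left]
    exact Finset.sum_congr rfl fun r _ => by ring
  calc ∑ r, w r * ⟪a r, v⟫ ^ 2 = ⟪M v, v⟫ := hM.symm
    _ ≤ ‖M v‖ * ‖v‖ := real_inner_le_norm _ _
    _ ≤ ‖M‖ * ‖v‖ * ‖v‖ := by gcongr; exact M.le_opNorm v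
    _ = ‖M‖ * ‖v‖ ^ 2 := by ring

theorem inner_sq_le_norm_sq_mul_norm_sq (x y : E) : ⟪x, y⟫ ^ 2 ≤ ‖x‖ ^ 2 * ‖y‖ ^ 2 := by
  rw [← mul_pow, ← sq_abs]
  exact pow_le_pow_left₀ (abs_nonneg _) (abs_real_inner_le_norm x y) 2

theorem three_mul_sum_inner_sq_mul_inner_sq_le (a : ι → E) {L : ℝ}
    (hL : 3 * ‖∑ r, ‖a r‖ ^ 2 • (innerSL ℝ (a r)).smulRight (a r)‖ ≤ L) (y v : E) :
    3 * ∑ r, ⟪a r, y⟫ ^ 2 * ⟪a r, v⟫ ^ 2 ≤ L * (2 * ⟪y, v⟫ ^ 2 + ‖y‖ ^ 2 * ‖v‖ ^ 2) := by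
  set M := ∑ r, ‖a r‖ ^ 2 • (innerSL ℝ (a r)).smulRight (a r)
  have hL₀ : 0 ≤ L := le_trans (by positivity) hL
  have hCS : ∑ r, ⟪a r, y⟫ ^ 2 * ⟪a r, v⟫ ^ 2 ≤ ‖y‖ ^ 2 * ∑ r, ‖a r‖ ^ 2 * ⟪a r, v⟫ ^ 2 := by
    rw [Finset.mul_sum]
    refine Finset.sum_le_sum fun r _ => ?_
    calc ⟪a r, y⟫ ^ 2 * ⟪a r, v⟫ ^ 2 ≤ ‖a r‖ ^ 2 * ‖y‖ ^ 2 * ⟪a r, v⟫ ^ 2 := by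
          gcongr; exact inner_sq_le_norm_sq_mul_norm_sq _ _
      _ = ‖y‖ ^ 2 * (‖a r‖ ^ 2 * ⟪a r, v⟫ ^ 2) := by ring
  calc 3 * ∑ r, ⟪a r, y⟫ ^ 2 * ⟪a r, v⟫ ^ 2
      ≤ 3 * (‖y‖ ^ 2 * (‖M‖ * ‖v‖ ^ 2)) := by
        grw [hCS, sum_mul_inner_sq_le_opNorm_mul_sq]
    _ = 3 * ‖M‖ * (‖y‖ ^ 2 * ‖v‖ ^ 2) := by ring
    _ ≤ L * (2 * ⟪y, v⟫ ^ 2 + ‖y‖ ^ 2 * ‖v‖ ^ 2) :=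
        mul_le_mul hL (by nlinarith [sq_nonneg ⟪y, v⟫]) (by positivity) hL₀

variable (x v : E)

theorem hasDerivAt_add_smul (t : ℝ) : HasDerivAt (fun t : ℝ => x + t • v) v t := by
  simpa using ((hasDerivAt_id t).smul_const v).const_add x

theorem hasDerivAt_inner_add_smul_pow (a : E) (n : ℕ) (t : ℝ) :
    HasDerivAt (fun t : ℝ => ⟪a, x + t • v⟫ ^ (n + 1))
      ((n + 1) * ⟪a, x + t • v⟫ ^ n * ⟪a, v⟫) t := by
  have := ((hasDerivAt_const t a).inner ℝ (hasDerivAt_add_smul x v t)).fun_pow (n + 1)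
  simpa [inner_zero_left] using this

theorem hasDerivAt_norm_add_smul_pow_four (t : ℝ) :
    HasDerivAt (fun t : ℝ => ‖x + t • v‖ ^ 4) (4 * (‖x + t • v‖ ^ 2 * ⟪x + t • v, v⟫)) t := by
  have h4 : (fun t : ℝ => ‖x + t • v‖ ^ 4) = fun t => (‖x + t • v‖ ^ 2) ^ 2 :=
    funext fun _ => by ring
  rw [h4]
  exact ((hasDerivAt_add_smul x v t).norm_sq.fun_pow 2).congr_deriv (by push_cast; ring)

theorem hasDerivAt_norm_sq_mul_inner_add_smul (t : ℝ) :
    HasDerivAt (fun t : ℝ => ‖x + t • v‖ ^ 2 * ⟪x + t • v, v⟫)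
      (2 * ⟪x + t • v, v⟫ ^ 2 + ‖x + t • v‖ ^ 2 * ‖v‖ ^ 2) t := by
  have hy := hasDerivAt_add_smul x v t
  refine (hy.norm_sq.fun_mul (hy.inner ℝ (hasDerivAt_const t v))).congr_deriv ?_
  rw [inner_zero_right, zero_add, real_inner_self_eq_norm_sq]
  ring

theorem convexOn_univ_mul_norm_pow_four_sub_sum_inner_pow_four (a : ι → E) (L c : ℝ)
    (hL : ∀ y v : E, 3 * ∑ r, ⟪a r, y⟫ ^ 2 * ⟪a r, v⟫ ^ 2 ≤
      L * (2 * ⟪y, v⟫ ^ 2 + ‖y‖ ^ 2 * ‖v‖ ^ 2)) :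
    ConvexOn ℝ univ fun x : E => L * (1 / 4 * ‖x‖ ^ 4) - (1 / 4 * ∑ r, ⟪a r, x⟫ ^ 4 + c) := by
  refine convexOn_univ_of_convexOn_line fun x v => ?_
  refine convexOn_univ_of_hasDerivAt2_nonneg
    (f' := fun t => L * (‖x + t • v‖ ^ 2 * ⟪x + t • v, v⟫) - ∑ r, ⟪a r, x + t • v⟫ ^ 3 * ⟪a r, v⟫)
    (f'' := fun t => L * (2 * ⟪x + t • v, v⟫ ^ 2 + ‖x + t • v‖ ^ 2 * ‖v‖ ^ 2) -
      3 * ∑ r, ⟪a r, x + t • v⟫ ^ 2 * ⟪a r, v⟫ ^ 2) (fun t => ?_) (fun t => ?_)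
    fun t => sub_nonneg.2 (hL _ v)
  · refine ((((hasDerivAt_norm_add_smul_pow_four x v t).const_mul (1 / 4)).const_mul L).sub
      ((HasDerivAt.fun_sum fun r _ => hasDerivAt_inner_add_smul_pow x v (a r) 3 t).const_mul (1 / 4)
        |>.add_const c)).congr_deriv ?_
    rw [Finset.mul_sum]; push_cast; ring_nf
  · refine (((hasDerivAt_norm_sq_mul_inner_add_smul x v t).const_mul L).sub
      (HasDerivAt.fun_sum fun r _ =>
        (hasDerivAt_inner_add_smul_pow x v (a r) 2 t).mul_const ⟪a r, v⟫)).congr_deriv ?_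
    rw [Finset.mul_sum]; push_cast; ring_nf

end InnerProductSpace

/-- For phase retrieval in DC form: with `f₁(x) = ¼ ∑ ⟪aᵣ, x⟫⁴ + ¼‖b‖²` and
`h(x) = ¼‖x‖⁴`, if `L ≥ 3‖∑ ‖aᵣ‖² aᵣ aᵣᵀ‖` (operator norm) then `L h - f₁` is convex. -/
theorem phase_retrieval_L_smad (d m : ℕ)
    (a : Fin m → EuclideanSpace ℝ (Fin d)) (b : EuclideanSpace ℝ (Fin m))
    (f₁ h : EuclideanSpace ℝ (Fin d) → ℝ)
    (hf₁ : ∀ x, f₁ x = (1 / 4) * ∑ r, ⟪a r, x⟫ ^ 4 + (1 / 4) * ‖b‖ ^ 2)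
    (hh : ∀ x, h x = (1 / 4) * ‖x‖ ^ 4)
    (L : ℝ)
    (hL : 3 * ‖∑ r, ‖a r‖ ^ 2 • ((innerSL ℝ (a r)).smulRight (a r))‖ ≤ L) :
    ConvexOn ℝ Set.univ (fun x => L * h x - f₁ x) := by
  have hfun : (fun x => L * h x - f₁ x) =
      fun x => L * (1 / 4 * ‖x‖ ^ 4) - (1 / 4 * ∑ r, ⟪a r, x⟫ ^ 4 + 1 / 4 * ‖b‖ ^ 2) :=
    funext fun x => by rw [hh, hf₁]
  rw [hfun]
  exact convexOn_univ_mul_norm_pow_four_sub_sum_inner_pow_four a L _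
    (three_mul_sum_inner_sq_mul_inner_sq_le a hL)
end

section
/- In the setting of the BPDCAe decrease inequality, suppose additionally $0<\lambda L<1$, $\rho\in[0,1)$ with $D_h(x^k,y^k)\leq\rho D_h(x^{k-1},x^k)$, and $\frac{\rho}{\lambda}\leq M\leq\frac{1}{\lambda}$. Then with $H_M(x,y)=\Psi(x)+M D_h(y,x)$, one has $H_M(x^{k+1},x^k)\leq H_M(x^k,x^{k-1})-\left(\frac{1}{\lambda}-M\right)D_h(x^k,x^{k+1})-\left(M-\frac{\rho}{\lambda}\right)D_h(x^{k-1},x^k)-\left(\frac{1}{\lambda}-L\right)D_h(x^{k+1},y^k)$; in particular $H_M(x^{k+1},x^k)\leq H_M(x^k,x^{k-1})$. -/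
open RealInnerProductSpace Set Filter Topology

/-!
Every first-order fact used comes from one observation: if a function differentiable at `x`
lies below a convex function `φ` and touches it at `x`, its tangent at `x` supports `φ`
(compare the slopes of `φ` on the segment from `x` with those of the minorant).
This gives the gradient inequality, hence `D_h ≥ 0`, the descent lemma
`f₁ x ≤ f₁ y + ⟪∇f₁ y, x - y⟫ + L D_h(x, y)` from the convexity of `L h - f₁`, and, through the
three-point identity of `D_h`, the proximal inequality for the minimizer `x^{k+1}`.
Adding the descent lemma at `(x^{k+1}, y^k)`, the gradient inequality of `f₁` at `y^k`, the
subgradient inequality of `f₂` at `x^k`, the proximal inequality with `z = x^k` and the restart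
condition yields the decrease estimate; its coefficients are nonnegative since
`ρ / λ ≤ M ≤ 1 / λ` and `λ L < 1`.
-/

section Normed

variable {E : Type*} [NormedAddCommGroup E] [NormedSpace ℝ E]

theorem ConvexOn.add_fderiv_le_of_le {φ ψ : E → ℝ} {ψ' : E →L[ℝ] ℝ} {x : E}
    (hφ : ConvexOn ℝ univ φ) (hψ : HasFDerivAt ψ ψ' x) (hle : ∀ᶠ u in 𝓝 x, ψ u ≤ φ u)
    (heq : ψ x = φ x) (z : E) : φ x + ψ' (z - x) ≤ φ z := by
  set v := z - x
  have hline : HasDerivAt (fun t : ℝ => x + t • v) v 0 := by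
    simpa using ((hasDerivAt_id (0 : ℝ)).smul_const v).const_add x
  have hslope : Tendsto (slope (fun t : ℝ => ψ (x + t • v)) 0) (𝓝[>] 0) (𝓝 (ψ' v)) := by
    have hψ0 : HasFDerivAt ψ ψ' (x + (0 : ℝ) • v) := by simpa using hψ
    exact (hasDerivAt_iff_tendsto_slope.mp (hψ0.comp_hasDerivAt 0 hline)).mono_left
      (nhdsWithin_mono 0 fun t ht => ne_of_gt ht)
  have hnear : ∀ᶠ t in 𝓝[>] (0 : ℝ), ψ (x + t • v) ≤ φ (x + t • v) := by
    have : Tendsto (fun t : ℝ => x + t • v) (𝓝 0) (𝓝 x) := by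
      simpa using hline.continuousAt.tendsto
    exact nhdsWithin_le_nhds (this.eventually hle)
  have hbound : ∀ᶠ t in 𝓝[>] (0 : ℝ), slope (fun t : ℝ => ψ (x + t • v)) 0 t ≤ φ z - φ x := by
    filter_upwards [hnear, Ioc_mem_nhdsGT (zero_lt_one' ℝ)] with t hψφ ⟨ht0, ht1⟩
    have hconv : φ (x + t • v) ≤ (1 - t) * φ x + t * φ z := by
      have hpt : (1 - t) • x + t • z = x + t • v := by simp only [v]; module
      simpa only [hpt, smul_eq_mul] using
        hφ.2 (mem_univ x) (mem_univ z) (sub_nonneg.mpr ht1) ht0.le (sub_add_cancel 1 t)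
    rw [slope_def_field, div_le_iff₀ (by simpa using ht0)]
    simp only [zero_smul, add_zero, sub_zero]
    linarith
  linarith [le_of_tendsto hslope hbound, show z = x + v by simp [v]]

theorem ConvexOn.add_fderiv_le {f : E → ℝ} {f' : E →L[ℝ] ℝ} {x : E}
    (hf : ConvexOn ℝ univ f) (hf' : HasFDerivAt f f' x) (y : E) : f x + f' (y - x) ≤ f y :=
  hf.add_fderiv_le_of_le hf' (Eventually.of_forall fun _ => le_rfl) rfl y

end Normed

section InnerProduct

variable {F : Type*} [NormedAddCommGroup F] [InnerProductSpace ℝ F]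

def bregman (h : F → ℝ) (h' : F → F) (x y : F) : ℝ := h x - h y - ⟪h' y, x - y⟫

theorem bregman_three_point (h : F → ℝ) (h' : F → F) (x y z : F) :
    bregman h h' z y = bregman h h' x y + bregman h h' z x + ⟪h' x - h' y, z - x⟫ := by
  have hzy : z - y = (z - x) + (x - y) := by abel
  simp only [bregman, hzy, inner_add_right, inner_sub_left]
  ring

variable [CompleteSpace F]

theorem ConvexOn.add_inner_le {f : F → ℝ} {f' x : F} (hf : ConvexOn ℝ univ f)
    (hf' : HasGradientAt f f' x) (y : F) : f x + ⟪f', y - x⟫ ≤ f y := by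
  simpa using hf.add_fderiv_le hf'.hasFDerivAt y

theorem bregman_nonneg {h : F → ℝ} {h' : F → F} {y : F} (hh : ConvexOn ℝ univ h)
    (hh' : HasGradientAt h (h' y) y) (x : F) : 0 ≤ bregman h h' x y := by
  have := hh.add_inner_le hh' x
  rw [bregman]
  linarith

theorem le_add_inner_add_mul_bregman {f h : F → ℝ} {f' : F} {h' : F → F} {y : F} {L : ℝ}
    (hf : HasGradientAt f f' y) (hh : HasGradientAt h (h' y) y)
    (hsmad : ConvexOn ℝ univ fun x => L * h x - f x) (x : F) :
    f x ≤ f y + ⟪f', x - y⟫ + L * bregman h h' x y := by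
  have hgrad : HasGradientAt (fun x => L * h x - f x) (L • h' y - f') y := by
    rw [hasGradientAt_iff_hasFDerivAt, map_sub, map_smul]
    exact (hh.hasFDerivAt.const_mul L).sub hf.hasFDerivAt
  have := hsmad.add_inner_le hgrad x
  rw [inner_sub_left, real_inner_smul_left] at this
  rw [bregman]
  linarith

theorem add_mul_bregman_le_of_isMinOn {g h : F → ℝ} {h' : F → F} {c y x : F} {a : ℝ}
    (hg : ConvexOn ℝ univ g) (hh : HasGradientAt h (h' x) x)
    (hmin : IsMinOn (fun u => g u + ⟪c, u - y⟫ + a * bregman h h' u y) univ x) (z : F) :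
    g x + ⟪c, x - y⟫ + a * bregman h h' x y + a * bregman h h' z x ≤
      g z + ⟪c, z - y⟫ + a * bregman h h' z y := by
  set q : F → ℝ := fun u => ⟪c, u - y⟫ + a * bregman h h' u y
  have hq : HasGradientAt q (c + a • (h' x - h' y)) x := by
    have hlin (w : F) : HasFDerivAt (fun u => ⟪w, u - y⟫) (innerSL ℝ w) x :=
      (innerSL ℝ w).hasFDerivAt.comp x ((hasFDerivAt_id x).sub_const y)
    refine hasGradientAt_iff_hasFDerivAt.mpr <| ((hlin c).add
      (((hh.hasFDerivAt.sub_const (h y)).sub (hlin (h' y))).const_mul a)).congr_fderiv ?_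
    ext v
    simp
  -- Minimality says exactly that `g` lies above `g x + q x - q`, with equality at `x`.
  have hsupp := hg.add_fderiv_le_of_le (ψ := fun u => g x + q x - q u)
    (hq.hasFDerivAt.const_sub _)
    (Eventually.of_forall fun u => by linarith [isMinOn_univ_iff.mp hmin u]) (by ring) z
  simp only [neg_apply, InnerProductSpace.toDual_apply_apply, inner_add_left,
    real_inner_smul_left] at hsupp
  have hzy : z - y = (z - x) + (x - y) := by abel
  rw [bregman_three_point h h' x y z, hzy, inner_add_right]
  linarith

end InnerProduct

theorem bpdcae_aux_decrease_general (d : ℕ)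
    (g f₁ f₂ h : EuclideanSpace ℝ (Fin d) → ℝ)
    (f₁' h' : EuclideanSpace ℝ (Fin d) → EuclideanSpace ℝ (Fin d))
    (hf₁ : ∀ x, HasGradientAt f₁ (f₁' x) x)
    (hh : ∀ x, HasGradientAt h (h' x) x)
    (hgconv : ConvexOn ℝ Set.univ g)
    (hf₁conv : ConvexOn ℝ Set.univ f₁)
    (hhconv : ConvexOn ℝ Set.univ h)
    (L : ℝ)
    (hsmad : ConvexOn ℝ Set.univ (fun x => L * h x - f₁ x))
    (D : EuclideanSpace ℝ (Fin d) → EuclideanSpace ℝ (Fin d) → ℝ)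
    (hD : ∀ x y, D x y = h x - h y - ⟪h' y, x - y⟫)
    (Ψ : EuclideanSpace ℝ (Fin d) → ℝ)
    (hΨ : ∀ x, Ψ x = f₁ x - f₂ x + g x)
    (lam : ℝ) (hlam : 0 < lam) (hlamL : lam * L < 1)
    (xkm xk yk ξk xkp : EuclideanSpace ℝ (Fin d))
    (hξk : ∀ y, f₂ y ≥ f₂ xk + ⟪ξk, y - xk⟫)
    (hmin : ∀ y, g xkp + ⟪f₁' yk - ξk, xkp - yk⟫ + (1 / lam) * D xkp yk ≤
      g y + ⟪f₁' yk - ξk, y - yk⟫ + (1 / lam) * D y yk)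
    (ρ : ℝ)
    (hrestart : D xk yk ≤ ρ * D xkm xk)
    (M : ℝ) (hM1 : ρ / lam ≤ M) (hM2 : M ≤ 1 / lam)
    (H : EuclideanSpace ℝ (Fin d) → EuclideanSpace ℝ (Fin d) → ℝ)
    (hH : ∀ x y, H x y = Ψ x + M * D y x) :
    H xkp xk ≤ H xk xkm - (1 / lam - M) * D xk xkp -
        (M - ρ / lam) * D xkm xk - (1 / lam - L) * D xkp yk ∧
      H xkp xk ≤ H xk xkm := by
  obtain rfl : D = bregman h h' := funext₂ hD
  have hdescent := le_add_inner_add_mul_bregman (hf₁ yk) (hh yk) hsmad xkp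
  have hf₁_lower := hf₁conv.add_inner_le (hf₁ yk) xk
  have hprox := add_mul_bregman_le_of_isMinOn hgconv (hh xkp) (isMinOn_univ_iff.mpr hmin) xk
  have hξ := hξk xkp
  have hrestart' : 1 / lam * bregman h h' xk yk ≤ ρ / lam * bregman h h' xkm xk := by
    rw [div_mul_eq_mul_div, one_mul, div_mul_eq_mul_div]
    exact div_le_div_of_nonneg_right hrestart hlam.le
  have hξ_split : ⟪ξk, xkp - xk⟫ = ⟪ξk, xkp - yk⟫ - ⟪ξk, xk - yk⟫ := by
    rw [← inner_sub_right, sub_sub_sub_cancel_right]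
  have hmain : H xkp xk ≤ H xk xkm - (1 / lam - M) * bregman h h' xk xkp -
      (M - ρ / lam) * bregman h h' xkm xk - (1 / lam - L) * bregman h h' xkp yk := by
    simp only [hH, hΨ, inner_sub_left] at hprox ⊢
    linarith
  have hLlam : L ≤ 1 / lam := by rw [le_div_iff₀ hlam]; linarith
  refine ⟨hmain, hmain.trans ?_⟩
  have h₁ := mul_nonneg (sub_nonneg.mpr hM2) (bregman_nonneg hhconv (hh xkp) xk)
  have h₂ := mul_nonneg (sub_nonneg.mpr hM1) (bregman_nonneg hhconv (hh xk) xkm)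
  have h₃ := mul_nonneg (sub_nonneg.mpr hLlam) (bregman_nonneg hhconv (hh yk) xkp)
  linarith

/-- Decrease of the auxiliary function `H_M` for BPDCAe under the adaptive
restart condition. -/
theorem bpdcae_aux_decrease (d : ℕ)
    (g f₁ f₂ h : EuclideanSpace ℝ (Fin d) → ℝ)
    (f₁' h' : EuclideanSpace ℝ (Fin d) → EuclideanSpace ℝ (Fin d))
    (hf₁ : ∀ x, HasGradientAt f₁ (f₁' x) x)
    (hh : ∀ x, HasGradientAt h (h' x) x)
    (hgconv : ConvexOn ℝ Set.univ g)
    (hf₁conv : ConvexOn ℝ Set.univ f₁)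
    (hf₂conv : ConvexOn ℝ Set.univ f₂)
    (hhconv : ConvexOn ℝ Set.univ h)
    (L : ℝ) (hL : 0 < L)
    (hsmad : ConvexOn ℝ Set.univ (fun x => L * h x - f₁ x))
    (D : EuclideanSpace ℝ (Fin d) → EuclideanSpace ℝ (Fin d) → ℝ)
    (hD : ∀ x y, D x y = h x - h y - ⟪h' y, x - y⟫)
    (Ψ : EuclideanSpace ℝ (Fin d) → ℝ)
    (hΨ : ∀ x, Ψ x = f₁ x - f₂ x + g x)
    (lam : ℝ) (hlam : 0 < lam) (hlamL : lam * L < 1)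
    (βk : ℝ) (hβk : 0 ≤ βk) (hβk1 : βk < 1)
    (xkm xk yk ξk xkp : EuclideanSpace ℝ (Fin d))
    (hyk : yk = xk + βk • (xk - xkm))
    (hξk : ∀ y, f₂ y ≥ f₂ xk + ⟪ξk, y - xk⟫)
    (hmin : ∀ y, g xkp + ⟪f₁' yk - ξk, xkp - yk⟫ + (1 / lam) * D xkp yk ≤
      g y + ⟪f₁' yk - ξk, y - yk⟫ + (1 / lam) * D y yk)
    (ρ : ℝ) (hρ : 0 ≤ ρ) (hρ1 : ρ < 1)
    (hrestart : D xk yk ≤ ρ * D xkm xk)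
    (M : ℝ) (hM1 : ρ / lam ≤ M) (hM2 : M ≤ 1 / lam)
    (H : EuclideanSpace ℝ (Fin d) → EuclideanSpace ℝ (Fin d) → ℝ)
    (hH : ∀ x y, H x y = Ψ x + M * D y x) :
    H xkp xk ≤ H xk xkm - (1 / lam - M) * D xk xkp -
        (M - ρ / lam) * D xkm xk - (1 / lam - L) * D xkp yk ∧
      H xkp xk ≤ H xk xkm :=
  bpdcae_aux_decrease_general d g f₁ f₂ h f₁' h' hf₁ hh hgconv hf₁conv hhconv L hsmad D hD Ψ hΨ lam
    hlam hlamL xkm xk yk ξk xkp hξk hmin ρ hrestart M hM1 hM2 H hH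
end
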